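/- arXiv:1610.00374 — 2 statements merged into one kernel-verified Lean document; each statement's English description precedes it below -/
import Mathlib

section
/- For real numbers μ_1, ..., μ_n (n ≥ 2) with ∑ μ_i = 0, setting B = ∑ μ_i² and B_3 = ∑ μ_i³, one has |B_3| ≤ ((n-2)/√(n(n-1))) · B^{3/2}. -/
/-!
With `n` terms, `B = ∑ μᵢ²` and `t = √(B / (n(n-1)))`, Cauchy–Schwarz on the other `n - 1` terms
gives Samuelson's bound `μᵢ ≤ (n-1) t`. Hence `(μᵢ - (n-1) t) (μᵢ + t)² ≤ 0` for every `i`; expanding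
and summing, the linear terms vanish because `∑ μᵢ = 0`, and what remains is
`∑ μᵢ³ ≤ (n-3) t B + n(n-1) t³ = (n-2) t B`. Applying this to `-μ` bounds `|∑ μᵢ³|`.
Equality holds for `μ = ((n-1) t, -t, …, -t)`.
-/

open Finset

variable {ι : Type*} [Fintype ι]

theorem card_mul_sq_le_of_sum_eq_zero {x : ι → ℝ} (hx : ∑ j, x j = 0) (i : ι) :
    Fintype.card ι * x i ^ 2 ≤ (Fintype.card ι - 1) * ∑ j, x j ^ 2 := by
  classical
  have hrest : ∑ j ∈ univ.erase i, x j = -x i := by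
    linarith [add_sum_erase univ x (mem_univ i)]
  have hrest_sq : ∑ j ∈ univ.erase i, x j ^ 2 = ∑ j, x j ^ 2 - x i ^ 2 := by
    linarith [add_sum_erase univ (fun j => x j ^ 2) (mem_univ i)]
  have hcard : ((univ.erase i).card : ℝ) = Fintype.card ι - 1 := by
    rw [card_erase_of_mem (mem_univ i), card_univ,
      Nat.cast_sub (Fintype.card_pos_iff.mpr ⟨i⟩), Nat.cast_one]
  have hcs := sq_sum_le_card_mul_sum_sq (s := univ.erase i) (f := x)
  rw [hrest, hrest_sq, hcard, neg_sq] at hcs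
  linarith

theorem cube_le_of_le {x a : ℝ} (hxa : x ≤ a) (s : ℝ) :
    x ^ 3 ≤ (a - 2 * s) * x ^ 2 + (2 * a * s - s ^ 2) * x + a * s ^ 2 := by
  nlinarith [mul_nonpos_of_nonpos_of_nonneg (sub_nonpos.mpr hxa) (sq_nonneg (x + s))]

theorem sum_cube_le_of_sum_eq_zero_of_le {x : ι → ℝ} (hx : ∑ j, x j = 0) {a : ℝ}
    (hxa : ∀ i, x i ≤ a) (s : ℝ) :
    ∑ i, x i ^ 3 ≤ (a - 2 * s) * ∑ i, x i ^ 2 + Fintype.card ι * (a * s ^ 2) := by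
  calc ∑ i, x i ^ 3
      ≤ ∑ i, ((a - 2 * s) * x i ^ 2 + (2 * a * s - s ^ 2) * x i + a * s ^ 2) :=
        sum_le_sum fun i _ => cube_le_of_le (hxa i) s
    _ = (a - 2 * s) * ∑ i, x i ^ 2 + Fintype.card ι * (a * s ^ 2) := by
        rw [sum_add_distrib, sum_add_distrib, ← mul_sum, ← mul_sum, hx, sum_const, card_univ,
          nsmul_eq_mul]
        ring

theorem rpow_three_halves_eq_mul_sqrt {B : ℝ} (hB : 0 ≤ B) : B ^ ((3 : ℝ) / 2) = B * Real.sqrt B := by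
  rw [show (3 : ℝ) / 2 = 1 + 1 / 2 by norm_num, Real.rpow_add' hB (by norm_num), Real.rpow_one,
    Real.sqrt_eq_rpow]

theorem sum_cube_le_of_sum_eq_zero (hcard : 2 ≤ Fintype.card ι) {x : ι → ℝ}
    (hx : ∑ i, x i = 0) :
    ∑ i, x i ^ 3 ≤ ((Fintype.card ι : ℝ) - 2) / Real.sqrt (Fintype.card ι * (Fintype.card ι - 1))
      * (∑ i, x i ^ 2) ^ ((3 : ℝ) / 2) := by
  have hn : (2 : ℝ) ≤ Fintype.card ι := by exact_mod_cast hcard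
  set n : ℝ := (Fintype.card ι : ℝ)
  set B := ∑ i, x i ^ 2
  have hB : 0 ≤ B := sum_nonneg fun i _ => sq_nonneg (x i)
  have hD : 0 < n * (n - 1) := by nlinarith
  set t := Real.sqrt (B / (n * (n - 1))) with ht_def
  have ht : 0 ≤ t := Real.sqrt_nonneg _
  have ht_sq : n * (n - 1) * t ^ 2 = B := by
    rw [Real.sq_sqrt (div_nonneg hB hD.le), mul_div_cancel₀ B hD.ne']
  have hsamuelson : ∀ i, x i ≤ (n - 1) * t := fun i =>
    le_of_sq_le_sq (by nlinarith [card_mul_sq_le_of_sum_eq_zero hx i]) (by nlinarith)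
  calc ∑ i, x i ^ 3
      ≤ ((n - 1) * t - 2 * t) * B + n * ((n - 1) * t * t ^ 2) :=
        sum_cube_le_of_sum_eq_zero_of_le hx hsamuelson t
    _ = (n - 2) * (B * t) := by linear_combination t * ht_sq
    _ = (n - 2) / Real.sqrt (n * (n - 1)) * B ^ ((3 : ℝ) / 2) := by
        rw [rpow_three_halves_eq_mul_sqrt hB, ht_def, Real.sqrt_div hB]
        ring

theorem stmt_0 (n : ℕ) (hn : 2 ≤ n) (μ : Fin n → ℝ) (hsum : ∑ i, μ i = 0) :
    |∑ i, μ i ^ 3| ≤ ((n : ℝ) - 2) / Real.sqrt (n * (n - 1)) * (∑ i, μ i ^ 2) ^ ((3 : ℝ) / 2) := by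
  have hcard : 2 ≤ Fintype.card (Fin n) := by rwa [Fintype.card_fin]
  have upper := sum_cube_le_of_sum_eq_zero hcard hsum
  have lower := sum_cube_le_of_sum_eq_zero hcard (x := fun i => -μ i) (by simp [hsum])
  simp only [Fintype.card_fin, neg_sq, Odd.neg_pow (by decide : Odd 3), sum_neg_distrib]
    at upper lower
  exact abs_le.mpr ⟨by linarith, upper⟩
end

section
/- For n ≥ 2 and 1/n ≤ r² < 1, with H defined by nH = (nr²-1)/(r√(1-r²)) and S = (1-2r²+nr⁴)/(r²(1-r²)), the identity -S - n = -n(1+H²) - (n/(4(n-1)))·(√(4(n-1)+n²H²) - (n-2)|H|)² holds. -/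
/-!
For `a = r²` and `q = r √(1 - r²)` we have `q² = a (1 - a)` and `n H q = n a - 1`, and the
discriminant is a perfect square: `(n a - 1)² + 4 (n - 1) a (1 - a) = ((n - 2) a + 1)²`.
Hence `√(4 (n - 1) + n² H²) = ((n - 2) a + 1) / |q|`, and when `n a ≥ 1` the bracket
`√(4 (n - 1) + n² H²) - (n - 2) |H|` collapses to `2 (n - 1) / (n |q|)`. What remains is a
rational identity in `n` and `a`.
-/

section ProductOfSpheres

variable {n a q H : ℝ}

theorem four_mul_sub_one_add_sq_mul_sq (hq : q ≠ 0) (hq2 : q ^ 2 = a * (1 - a))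
    (hH : n * H * q = n * a - 1) :
    4 * (n - 1) + n ^ 2 * H ^ 2 = (((n - 2) * a + 1) / q) ^ 2 := by
  rw [div_pow, eq_div_iff (pow_ne_zero 2 hq)]
  linear_combination (4 * (n - 1)) * hq2 + (n * H * q + n * a - 1) * hH

theorem sqrt_four_mul_sub_one_add_sq_mul_sq (hq : q ≠ 0) (hq2 : q ^ 2 = a * (1 - a))
    (hH : n * H * q = n * a - 1) (ha : 0 ≤ (n - 2) * a + 1) :
    √(4 * (n - 1) + n ^ 2 * H ^ 2) = ((n - 2) * a + 1) / |q| := by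
  rw [four_mul_sub_one_add_sq_mul_sq hq hq2 hH, Real.sqrt_sq_eq_abs, abs_div, abs_of_nonneg ha]

theorem mul_abs_mul_abs_eq (hn : 0 < n) (hH : n * H * q = n * a - 1) (ha : 1 ≤ n * a) :
    n * |H| * |q| = n * a - 1 := by
  simpa only [abs_mul, abs_of_pos hn, abs_of_nonneg (by linarith : 0 ≤ n * a - 1)] using
    congrArg abs hH

theorem sqrt_four_mul_sub_one_add_sq_mul_sq_sub (hn : 1 < n) (hq : q ≠ 0)
    (hq2 : q ^ 2 = a * (1 - a)) (hH : n * H * q = n * a - 1) (ha : 1 ≤ n * a) :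
    √(4 * (n - 1) + n ^ 2 * H ^ 2) - (n - 2) * |H| = 2 * (n - 1) / (n * |q|) := by
  have hq_pos : 0 < |q| := abs_pos.mpr hq
  have ha_pos : 0 < a := by nlinarith
  have ha_lt : a < 1 := by nlinarith [pow_pos hq_pos 2, sq_abs q]
  have habs := mul_abs_mul_abs_eq (by linarith) hH ha
  rw [sqrt_four_mul_sub_one_add_sq_mul_sq hq hq2 hH (by nlinarith), eq_div_iff (by positivity)]
  field_simp
  linear_combination (2 - n) * habs

theorem sq_norm_eq_of_mean_curvature (hn : 1 < n) (hq : q ≠ 0) (hq2 : q ^ 2 = a * (1 - a))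
    (hH : n * H * q = n * a - 1) (ha : 1 ≤ n * a) :
    (1 - 2 * a + n * a ^ 2) / (a * (1 - a)) =
      n * H ^ 2 + n / (4 * (n - 1)) * (√(4 * (n - 1) + n ^ 2 * H ^ 2) - (n - 2) * |H|) ^ 2 := by
  have hH2 : n ^ 2 * H ^ 2 * q ^ 2 = (n * a - 1) ^ 2 := by rw [← hH]; ring
  have hn0 : n ≠ 0 := by positivity
  have hn1 : n - 1 ≠ 0 := sub_ne_zero.mpr hn.ne'
  rw [sqrt_four_mul_sub_one_add_sq_mul_sq_sub hn hq hq2 hH ha, div_pow, mul_pow (n : ℝ), sq_abs,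
    ← hq2]
  field_simp
  linear_combination (-4) * hH2

end ProductOfSpheres

theorem stmt_4 (n : ℕ) (hn : 2 ≤ n) (r H S : ℝ)
    (hr : 1 / (n : ℝ) ≤ r ^ 2) (hr1 : r ^ 2 < 1)
    (hH : (n : ℝ) * H = ((n : ℝ) * r ^ 2 - 1) / (r * Real.sqrt (1 - r ^ 2)))
    (hS : S = (1 - 2 * r ^ 2 + (n : ℝ) * r ^ 4) / (r ^ 2 * (1 - r ^ 2))) :
    -S - n = -(n : ℝ) * (1 + H ^ 2) -
      ((n : ℝ) / (4 * ((n : ℝ) - 1))) *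
        (Real.sqrt (4 * ((n : ℝ) - 1) + n ^ 2 * H ^ 2) - ((n : ℝ) - 2) * |H|) ^ 2 := by
  have hn1 : (1 : ℝ) < n := by exact_mod_cast hn
  have hnr : 1 ≤ (n : ℝ) * r ^ 2 := by
    rwa [div_le_iff₀ (by positivity), mul_comm] at hr
  have hr0 : r ≠ 0 := by
    rintro rfl
    norm_num at hnr
  have hq : r * √(1 - r ^ 2) ≠ 0 := mul_ne_zero hr0 (Real.sqrt_pos.mpr (by linarith)).ne'
  have hq2 : (r * √(1 - r ^ 2)) ^ 2 = r ^ 2 * (1 - r ^ 2) := by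
    rw [mul_pow, Real.sq_sqrt (by linarith)]
  have hHq : (n : ℝ) * H * (r * √(1 - r ^ 2)) = n * r ^ 2 - 1 := by
    rw [hH, div_mul_cancel₀ _ hq]
  have hS' := sq_norm_eq_of_mean_curvature hn1 hq hq2 hHq hnr
  rw [hS, show r ^ 4 = (r ^ 2) ^ 2 by ring, hS']
  ring
end
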